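/- arXiv:2207.00426 — 6 statements merged into one kernel-verified Lean document; each statement's English description precedes it below -/
import Mathlib

section
/- Let C = UUᵀ and J = ZZᵀ with I + UᵀJU invertible, and suppose Ξ₁₁, Ξ₂₁, Ξ₂₂ satisfy Ξ₁₁Ξ₁₁ᵀ = UᵀJU + I, Ξ₂₁Ξ₁₁ᵀ = JU, and Ξ₂₁Ξ₂₁ᵀ + Ξ₂₂Ξ₂₂ᵀ = J, with Ξ₁₁ invertible. Then (I + JC)⁻¹ J = Ξ₂₂ Ξ₂₂ᵀ. -/
open Matrix

theorem inv_one_add_JC_mul_J (n : ℕ)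
    (U Z C J Ξ₁₁ Ξ₂₁ Ξ₂₂ : Matrix (Fin n) (Fin n) ℝ)
    (hC : C = U * Uᵀ) (hJ : J = Z * Zᵀ)
    (hinv : IsUnit (1 + Uᵀ * J * U))
    (h11 : Ξ₁₁ * Ξ₁₁ᵀ = Uᵀ * J * U + 1)
    (h21 : Ξ₂₁ * Ξ₁₁ᵀ = J * U)
    (h22 : Ξ₂₁ * Ξ₂₁ᵀ + Ξ₂₂ * Ξ₂₂ᵀ = J)
    (hXi : IsUnit Ξ₁₁) :
    (1 + J * C)⁻¹ * J = Ξ₂₂ * Ξ₂₂ᵀ := by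
  have hJsymm : Jᵀ = J := by rw [hJ, transpose_mul, transpose_transpose]
  set A : Matrix (Fin n) (Fin n) ℝ := 1 + Uᵀ * J * U with hA
  have hA11 : Ξ₁₁ * Ξ₁₁ᵀ = A := by rw [h11, hA, add_comm]
  have hXiT : IsUnit Ξ₁₁ᵀ := (Matrix.isUnit_iff_isUnit_det _).mpr
    (by rw [Matrix.det_transpose]; exact (Matrix.isUnit_iff_isUnit_det _).mp hXi)
  -- Ξ₂₁ = J * U * (Ξ₁₁ᵀ)⁻¹
  have h21' : Ξ₂₁ = J * U * (Ξ₁₁ᵀ)⁻¹ := by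
    have := congrArg (· * (Ξ₁₁ᵀ)⁻¹) h21
    simpa [Matrix.mul_assoc,
      Matrix.mul_nonsing_inv _ ((Matrix.isUnit_iff_isUnit_det _).mp hXiT)] using this
  have hAunit : IsUnit A := hinv
  have hAinv : A * A⁻¹ = 1 := Matrix.mul_nonsing_inv _ ((Matrix.isUnit_iff_isUnit_det _).mp hAunit)
  have hAinv' : A⁻¹ * A = 1 := Matrix.nonsing_inv_mul _ ((Matrix.isUnit_iff_isUnit_det _).mp hAunit)
  -- Ξ₂₁ * Ξ₂₁ᵀ = J * U * A⁻¹ * Uᵀ * J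
  have hkey : Ξ₂₁ * Ξ₂₁ᵀ = J * U * A⁻¹ * (Uᵀ * J) := by
    have hinvA : (Ξ₁₁ᵀ)⁻¹ * (Ξ₁₁⁻¹) = A⁻¹ := by
      rw [← Matrix.mul_inv_rev, hA11]
    rw [h21', transpose_mul, transpose_mul, transpose_nonsing_inv, transpose_transpose, hJsymm]
    calc J * U * (Ξ₁₁ᵀ)⁻¹ * ((Ξ₁₁)⁻¹ * (Uᵀ * J))
        = J * U * ((Ξ₁₁ᵀ)⁻¹ * (Ξ₁₁)⁻¹) * (Uᵀ * J) := by
          simp [Matrix.mul_assoc]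
      _ = J * U * A⁻¹ * (Uᵀ * J) := by rw [hinvA]
  have hXi22 : Ξ₂₂ * Ξ₂₂ᵀ = J - J * U * A⁻¹ * (Uᵀ * J) := by
    rw [← hkey]; linear_combination (norm := noncomm_ring) h22
  -- (1 + J*C) is invertible
  have hdet : IsUnit (1 + J * C) := by
    rw [Matrix.isUnit_iff_isUnit_det, hC, ← Matrix.mul_assoc]
    rw [show (1 : Matrix (Fin n) (Fin n) ℝ) + J * U * Uᵀ = 1 + (J * U) * Uᵀ by ring]
    rw [Matrix.det_one_add_mul_comm]
    rw [show (1 : Matrix (Fin n) (Fin n) ℝ) + Uᵀ * (J * U) = A by rw [hA, Matrix.mul_assoc]]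
    exact (Matrix.isUnit_iff_isUnit_det _).mp hAunit
  -- main computation
  have hmain : (1 + J * C) * (Ξ₂₂ * Ξ₂₂ᵀ) = J := by
    rw [hXi22, hC]
    have expand : (1 + J * (U * Uᵀ)) * (J - J * U * A⁻¹ * (Uᵀ * J))
        = J + J * U * Uᵀ * J - J * U * (A * A⁻¹) * (Uᵀ * J) := by
      rw [show J * U * (A * A⁻¹) * (Uᵀ * J) = J * U * ((1 + Uᵀ * J * U) * A⁻¹) * (Uᵀ * J) from
        by rw [hA]]
      noncomm_ring
    rw [expand, hAinv]
    noncomm_ring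
  calc (1 + J * C)⁻¹ * J = (1 + J * C)⁻¹ * ((1 + J * C) * (Ξ₂₂ * Ξ₂₂ᵀ)) := by rw [hmain]
    _ = Ξ₂₂ * Ξ₂₂ᵀ := by
        rw [← Matrix.mul_assoc,
          Matrix.nonsing_inv_mul _ ((Matrix.isUnit_iff_isUnit_det _).mp hdet), Matrix.one_mul]
end

section
/- Under the same hypotheses (C = UUᵀ, J = ZZᵀ, Ξ₁₁Ξ₁₁ᵀ = UᵀJU + I with Ξ₁₁ invertible, Ξ₂₁Ξ₁₁ᵀ = JU), one has (I + JC)⁻¹ = I − Ξ₂₁ Ξ₁₁⁻¹ Uᵀ. -/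
open Matrix

theorem inv_one_add_JC (n : ℕ)
    (U Z C J Ξ₁₁ Ξ₂₁ : Matrix (Fin n) (Fin n) ℝ)
    (hC : C = U * Uᵀ) (hJ : J = Z * Zᵀ)
    (h11 : Ξ₁₁ * Ξ₁₁ᵀ = Uᵀ * J * U + 1)
    (h21 : Ξ₂₁ * Ξ₁₁ᵀ = J * U)
    (hXi : IsUnit Ξ₁₁) :
    (1 + J * C)⁻¹ = 1 - Ξ₂₁ * Ξ₁₁⁻¹ * Uᵀ := by
  have hdet : IsUnit Ξ₁₁.det := (Matrix.isUnit_iff_isUnit_det _).mp hXi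
  have hdetT : IsUnit Ξ₁₁ᵀ.det := by rwa [Matrix.det_transpose]
  set M : Matrix (Fin n) (Fin n) ℝ := Uᵀ * J * U + 1 with hMdef
  have hMdet : IsUnit M.det := by
    rw [← h11, Matrix.det_mul]
    exact hdet.mul hdetT
  have hMinv : M * M⁻¹ = 1 := Matrix.mul_nonsing_inv _ hMdet
  have key : Ξ₂₁ * Ξ₁₁⁻¹ = J * U * M⁻¹ := by
    have h1 : Ξ₂₁ * Ξ₁₁⁻¹ * M = J * U := by
      rw [← h11, ← mul_assoc, mul_assoc Ξ₂₁, Matrix.nonsing_inv_mul _ hdet,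
        mul_one, h21]
    calc Ξ₂₁ * Ξ₁₁⁻¹ = Ξ₂₁ * Ξ₁₁⁻¹ * (M * M⁻¹) := by rw [hMinv, mul_one]
      _ = Ξ₂₁ * Ξ₁₁⁻¹ * M * M⁻¹ := by noncomm_ring
      _ = J * U * M⁻¹ := by rw [h1]
  have hright : (1 + J * C) * (1 - Ξ₂₁ * Ξ₁₁⁻¹ * Uᵀ) = 1 := by
    rw [key, hC]
    have h2 : Uᵀ * J * U = M - 1 := by rw [hMdef]; noncomm_ring
    have h3 : J * (U * Uᵀ) * (J * U * M⁻¹ * Uᵀ)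
        = J * U * Uᵀ - J * U * M⁻¹ * Uᵀ := by
      calc J * (U * Uᵀ) * (J * U * M⁻¹ * Uᵀ)
          = J * U * (Uᵀ * J * U) * M⁻¹ * Uᵀ := by noncomm_ring
        _ = J * U * (M - 1) * M⁻¹ * Uᵀ := by rw [h2]
        _ = J * U * (M * M⁻¹) * Uᵀ - J * U * M⁻¹ * Uᵀ := by noncomm_ring
        _ = J * U * Uᵀ - J * U * M⁻¹ * Uᵀ := by rw [hMinv, mul_one]
    calc (1 + J * (U * Uᵀ)) * (1 - J * U * M⁻¹ * Uᵀ)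
        = 1 - J * U * M⁻¹ * Uᵀ + J * (U * Uᵀ)
          - J * (U * Uᵀ) * (J * U * M⁻¹ * Uᵀ) := by noncomm_ring
      _ = 1 := by rw [h3]; noncomm_ring
  exact Matrix.inv_eq_right_inv hright
end

section
/- With C = UUᵀ, J = ZZᵀ, I + UᵀJU invertible, and Ξ₁₁ invertible satisfying Ξ₁₁Ξ₁₁ᵀ = UᵀJU + I, the matrix A_j (I + CJ)⁻¹ C A_jᵀ equals (A_j U Ξ₁₁⁻ᵀ)(A_j U Ξ₁₁⁻ᵀ)ᵀ for any matrix A_j ∈ ℝ^{n×n}; in particular it is positive semidefinite. -/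
open Matrix

namespace Matrix

theorem posSemidef_self_mul_transpose {m n R : Type*} [Finite m] [Fintype n] [CommRing R]
    [PartialOrder R] [StarRing R] [StarOrderedRing R] [TrivialStar R]
    (A : Matrix m n R) : (A * Aᵀ).PosSemidef := by
  simpa only [conjTranspose_eq_transpose_of_trivial] using posSemidef_self_mul_conjTranspose A

variable {m n α : Type*} [Fintype m] [Fintype n] [DecidableEq m] [DecidableEq n] [CommRing α]

/-- Push-through identity. No invertibility is needed: `det (1 + A * B) = det (1 + B * A)`, so
either both inverses are genuine or both are the junk value `0`. -/
theorem one_add_mul_inv_mul_comm (A : Matrix m n α) (B : Matrix n m α) :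
    (1 + A * B)⁻¹ * A = A * (1 + B * A)⁻¹ := by
  by_cases hBA : IsUnit (1 + B * A).det
  · have hAB : IsUnit (1 + A * B).det := by rwa [det_one_add_mul_comm]
    have hcomm : (1 + A * B) * A = A * (1 + B * A) := by
      rw [Matrix.add_mul, Matrix.mul_add, Matrix.one_mul, Matrix.mul_one, Matrix.mul_assoc]
    calc (1 + A * B)⁻¹ * A = (1 + A * B)⁻¹ * (A * (1 + B * A)) * (1 + B * A)⁻¹ := by
          rw [Matrix.mul_assoc, Matrix.mul_assoc A, mul_nonsing_inv _ hBA, Matrix.mul_one]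
      _ = A * (1 + B * A)⁻¹ := by
          rw [← hcomm, ← Matrix.mul_assoc, nonsing_inv_mul _ hAB, Matrix.one_mul]
  · have hAB : ¬IsUnit (1 + A * B).det := by rwa [det_one_add_mul_comm]
    rw [nonsing_inv_apply_not_isUnit _ hAB, nonsing_inv_apply_not_isUnit _ hBA,
      Matrix.zero_mul, Matrix.mul_zero]

theorem mul_transpose_inv (X : Matrix n n α) : (X * Xᵀ)⁻¹ = X⁻¹ᵀ * X⁻¹ := by
  rw [mul_inv_rev, transpose_nonsing_inv]

end Matrix

theorem sandwich_factorization_general (n : ℕ)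
    (Aj U C J Ξ₁₁ : Matrix (Fin n) (Fin n) ℝ)
    (hC : C = U * Uᵀ)
    (h11 : Ξ₁₁ * Ξ₁₁ᵀ = Uᵀ * J * U + 1) :
    Aj * (1 + C * J)⁻¹ * C * Ajᵀ =
        (Aj * U * (Ξ₁₁⁻¹)ᵀ) * (Aj * U * (Ξ₁₁⁻¹)ᵀ)ᵀ ∧
      (Aj * (1 + C * J)⁻¹ * C * Ajᵀ).PosSemidef := by
  have hsandwich : (1 + C * J)⁻¹ * C = U * (Ξ₁₁⁻¹ᵀ * Ξ₁₁⁻¹) * Uᵀ := by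
    rw [← mul_transpose_inv, h11, add_comm _ 1, hC, ← Matrix.mul_assoc,
      Matrix.mul_assoc U Uᵀ J, one_add_mul_inv_mul_comm, Matrix.mul_assoc Uᵀ]
  have hfactor : Aj * (1 + C * J)⁻¹ * C * Ajᵀ =
      (Aj * U * (Ξ₁₁⁻¹)ᵀ) * (Aj * U * (Ξ₁₁⁻¹)ᵀ)ᵀ := by
    rw [Matrix.mul_assoc Aj, hsandwich]
    simp only [transpose_mul, transpose_transpose, Matrix.mul_assoc]
  exact ⟨hfactor, hfactor ▸ posSemidef_self_mul_transpose _⟩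

theorem sandwich_factorization (n : ℕ)
    (Aj U Z C J Ξ₁₁ : Matrix (Fin n) (Fin n) ℝ)
    (hC : C = U * Uᵀ) (hJ : J = Z * Zᵀ)
    (hinv : IsUnit (1 + Uᵀ * J * U))
    (h11 : Ξ₁₁ * Ξ₁₁ᵀ = Uᵀ * J * U + 1)
    (hXi : IsUnit Ξ₁₁) :
    Aj * (1 + C * J)⁻¹ * C * Ajᵀ =
        (Aj * U * (Ξ₁₁⁻¹)ᵀ) * (Aj * U * (Ξ₁₁⁻¹)ᵀ)ᵀ ∧
      (Aj * (1 + C * J)⁻¹ * C * Ajᵀ).PosSemidef :=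
  sandwich_factorization_general n Aj U C J Ξ₁₁ hC h11
end

section
/- Let Ψ = [[Ψ₁₁, 0],[Ψ₂₁, Ψ₂₂]] be a block lower-triangular matrix with Ψ Ψᵀ = [[HΛHᵀ + Ω, HΛ],[ΛHᵀ, Λ]], Ψ₁₁ invertible, and set S = HΛHᵀ + Ω, K = Ψ₂₁ Ψ₁₁⁻¹. Then K = Λ Hᵀ S⁻¹ and Ψ₂₂ Ψ₂₂ᵀ = Λ − K S Kᵀ = (I − KH)Λ. -/
open Matrix

theorem sqrt_filter_gain (nx ny : ℕ)
    (H : Matrix (Fin ny) (Fin nx) ℝ)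
    (Λ : Matrix (Fin nx) (Fin nx) ℝ) (Ω : Matrix (Fin ny) (Fin ny) ℝ)
    (hΛ : Λ.PosSemidef) (hΩ : Ω.PosSemidef)
    (Ψ₁₁ : Matrix (Fin ny) (Fin ny) ℝ) (Ψ₂₁ : Matrix (Fin nx) (Fin ny) ℝ)
    (Ψ₂₂ : Matrix (Fin nx) (Fin nx) ℝ)
    (S : Matrix (Fin ny) (Fin ny) ℝ) (hS : S = H * Λ * Hᵀ + Ω)
    (hSinv : IsUnit S) (hΨ₁₁ : IsUnit Ψ₁₁)
    (hΨ : (fromBlocks Ψ₁₁ 0 Ψ₂₁ Ψ₂₂) * (fromBlocks Ψ₁₁ 0 Ψ₂₁ Ψ₂₂)ᵀ =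
      fromBlocks S (H * Λ) (Λ * Hᵀ) Λ)
    (K : Matrix (Fin nx) (Fin ny) ℝ) (hK : K = Ψ₂₁ * Ψ₁₁⁻¹) :
    K = Λ * Hᵀ * S⁻¹ ∧ Ψ₂₂ * Ψ₂₂ᵀ = Λ - K * S * Kᵀ ∧
      Λ - K * S * Kᵀ = (1 - K * H) * Λ := by
  rw [fromBlocks_transpose, fromBlocks_multiply] at hΨ
  have h11 : Ψ₁₁ * Ψ₁₁ᵀ = S := by simpa using congrArg Matrix.toBlocks₁₁ hΨ
  have h12 : Ψ₁₁ * Ψ₂₁ᵀ = H * Λ := by simpa using congrArg Matrix.toBlocks₁₂ hΨ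
  have h21 : Ψ₂₁ * Ψ₁₁ᵀ = Λ * Hᵀ := by simpa using congrArg Matrix.toBlocks₂₁ hΨ
  have h22 : Ψ₂₁ * Ψ₂₁ᵀ + Ψ₂₂ * Ψ₂₂ᵀ = Λ := by
    simpa using congrArg Matrix.toBlocks₂₂ hΨ
  have hdet : IsUnit Ψ₁₁.det := (isUnit_iff_isUnit_det _).mp hΨ₁₁
  have hdetT : IsUnit Ψ₁₁ᵀ.det := by rwa [det_transpose]
  have hdetS : IsUnit S.det := (isUnit_iff_isUnit_det _).mp hSinv
  have hinv : Ψ₁₁⁻¹ * Ψ₁₁ = 1 := nonsing_inv_mul _ hdet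
  have hKS : K * S = Λ * Hᵀ := by
    rw [hK, ← h11, ← h21, Matrix.mul_assoc, ← Matrix.mul_assoc Ψ₁₁⁻¹, hinv,
      Matrix.one_mul]
  have hKSK : K * S * Kᵀ = Ψ₂₁ * Ψ₂₁ᵀ := by
    rw [hKS, hK, transpose_mul, transpose_nonsing_inv, ← h21,
      Matrix.mul_assoc Ψ₂₁, ← Matrix.mul_assoc Ψ₁₁ᵀ,
      mul_nonsing_inv _ hdetT, Matrix.one_mul]
  refine ⟨?_, ?_, ?_⟩
  · rw [← hKS, Matrix.mul_assoc, mul_nonsing_inv _ hdetS, Matrix.mul_one]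
  · rw [hKSK, ← h22, add_sub_cancel_left]
  · have h : K * H * Λ = K * S * Kᵀ := by
      rw [hKSK, Matrix.mul_assoc, ← h12, hK, Matrix.mul_assoc Ψ₂₁,
        ← Matrix.mul_assoc Ψ₁₁⁻¹, hinv, Matrix.one_mul]
    rw [Matrix.sub_mul, Matrix.one_mul, h]
end

section
/- Given the filtering combination parameters A_ij = A_j(I + C_i J_j)⁻¹ A_i, if C_i = U_i U_iᵀ, J_j = Z_j Z_jᵀ, and Ξ₁₁, Ξ₂₁ satisfy Ξ₁₁Ξ₁₁ᵀ = U_iᵀ J_j U_i + I with Ξ₁₁ invertible and Ξ₂₁Ξ₁₁ᵀ = J_j U_i, then A_ij = A_j A_i − A_j U_i Ξ₁₁⁻ᵀ Ξ₂₁ᵀ A_i. -/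
open Matrix

theorem combination_Aij (n : ℕ)
    (Ai Aj Ui Zj Ci Jj Ξ₁₁ Ξ₂₁ : Matrix (Fin n) (Fin n) ℝ)
    (hC : Ci = Ui * Uiᵀ) (hJ : Jj = Zj * Zjᵀ)
    (hinv : IsUnit (1 + Ci * Jj))
    (h11 : Ξ₁₁ * Ξ₁₁ᵀ = Uiᵀ * Jj * Ui + 1)
    (h21 : Ξ₂₁ * Ξ₁₁ᵀ = Jj * Ui)
    (hXi : IsUnit Ξ₁₁) :
    Aj * (1 + Ci * Jj)⁻¹ * Ai =
      Aj * Ai - Aj * Ui * (Ξ₁₁⁻¹)ᵀ * Ξ₂₁ᵀ * Ai := by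
  have hJs : Jjᵀ = Jj := by
    rw [hJ]; simp [Matrix.transpose_mul]
  set M : Matrix (Fin n) (Fin n) ℝ := Uiᵀ * Jj * Ui + 1 with hMdef
  have hMX : M = Ξ₁₁ * Ξ₁₁ᵀ := h11.symm
  have hd : IsUnit Ξ₁₁.det := (Matrix.isUnit_iff_isUnit_det _).mp hXi
  have hdet : IsUnit M.det := by
    rw [hMX]; rw [Matrix.det_mul, Matrix.det_transpose]; exact hd.mul hd
  have hMM : M * M⁻¹ = 1 := Matrix.mul_nonsing_inv _ hdet
  have hCJU : Ci * Jj * Ui = Ui * M - Ui := by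
    rw [hC, hMdef]; noncomm_ring
  have h1 : Ci * Jj * (Ui * M⁻¹ * Uiᵀ * Jj) = Ci * Jj - Ui * M⁻¹ * Uiᵀ * Jj := by
    have e1 : Ci * Jj * (Ui * M⁻¹ * Uiᵀ * Jj) = (Ci * Jj * Ui) * (M⁻¹ * Uiᵀ * Jj) := by
      noncomm_ring
    rw [e1, hCJU, sub_mul]
    have e2 : Ui * M * (M⁻¹ * Uiᵀ * Jj) = Ci * Jj := by
      have e3 : Ui * M * (M⁻¹ * Uiᵀ * Jj) = Ui * (M * M⁻¹) * (Uiᵀ * Jj) := by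
        noncomm_ring
      rw [e3, hMM, mul_one, hC, Matrix.mul_assoc]
    rw [e2]
    noncomm_ring
  have key : (1 + Ci * Jj) * (1 - Ui * M⁻¹ * Uiᵀ * Jj) = 1 := by
    have e4 : (1 + Ci * Jj) * (1 - Ui * M⁻¹ * Uiᵀ * Jj)
        = 1 + Ci * Jj - Ui * M⁻¹ * Uiᵀ * Jj - Ci * Jj * (Ui * M⁻¹ * Uiᵀ * Jj) := by
      noncomm_ring
    rw [e4, h1]; abel
  have hinv_eq : (1 + Ci * Jj)⁻¹ = 1 - Ui * M⁻¹ * Uiᵀ * Jj :=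
    Matrix.inv_eq_right_inv key
  have hUJ : Uiᵀ * Jj = Ξ₁₁ * Ξ₂₁ᵀ := by
    have h := congrArg Matrix.transpose h21
    simpa [Matrix.transpose_mul, hJs] using h.symm
  have hΞ : (Ξ₁₁⁻¹)ᵀ * Ξ₂₁ᵀ = M⁻¹ * (Uiᵀ * Jj) := by
    rw [hUJ, hMX, Matrix.mul_inv_rev, Matrix.transpose_nonsing_inv,
      Matrix.mul_assoc, ← Matrix.mul_assoc Ξ₁₁⁻¹, Matrix.nonsing_inv_mul _ hd, one_mul]
  have hfinal : Aj * Ui * (Ξ₁₁⁻¹)ᵀ * Ξ₂₁ᵀ * Ai = Aj * (Ui * M⁻¹ * Uiᵀ * Jj) * Ai := by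
    rw [Matrix.mul_assoc (Aj * Ui), hΞ]
    noncomm_ring
  rw [hinv_eq, hfinal]
  noncomm_ring
end

section
/- Let Φ = [[Φ₁₁, 0],[Φ₂₁, Φ₂₂]] be block lower triangular with Φ Φᵀ = [[F P Fᵀ + Λ, F P],[P Fᵀ, P]] and Φ₁₁ invertible. Set E = Φ₂₁ Φ₁₁⁻¹. Then E = P Fᵀ (F P Fᵀ + Λ)⁻¹ and Φ₂₂Φ₂₂ᵀ = P − E F P. -/
open Matrix

theorem sqrt_smoother_gain (n : ℕ)
    (F P Λ Φ₁₁ Φ₂₁ Φ₂₂ : Matrix (Fin n) (Fin n) ℝ)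
    (hP : P.PosSemidef) (hΛ : Λ.PosSemidef)
    (hSinv : IsUnit (F * P * Fᵀ + Λ)) (hΦ₁₁ : IsUnit Φ₁₁)
    (hΦ : (fromBlocks Φ₁₁ 0 Φ₂₁ Φ₂₂) * (fromBlocks Φ₁₁ 0 Φ₂₁ Φ₂₂)ᵀ =
      fromBlocks (F * P * Fᵀ + Λ) (F * P) (P * Fᵀ) P)
    (E : Matrix (Fin n) (Fin n) ℝ) (hE : E = Φ₂₁ * Φ₁₁⁻¹) :
    E = P * Fᵀ * (F * P * Fᵀ + Λ)⁻¹ ∧ Φ₂₂ * Φ₂₂ᵀ = P - E * F * P := by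
  rw [fromBlocks_transpose, fromBlocks_multiply] at hΦ
  simp only [transpose_zero, Matrix.mul_zero, Matrix.zero_mul, add_zero, zero_add] at hΦ
  rw [fromBlocks_inj] at hΦ
  obtain ⟨h11, h12, h21, h22⟩ := hΦ
  have hd1 : IsUnit Φ₁₁.det := ((Matrix.isUnit_iff_isUnit_det Φ₁₁).mp hΦ₁₁)
  have hdS : IsUnit (F * P * Fᵀ + Λ).det := ((Matrix.isUnit_iff_isUnit_det _).mp hSinv)
  have hinv : Φ₁₁⁻¹ * Φ₁₁ = 1 := nonsing_inv_mul _ hd1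
  have hEeq : E * (F * P * Fᵀ + Λ) = P * Fᵀ := by
    rw [hE, ← h11, ← h21, mul_assoc, ← mul_assoc Φ₁₁⁻¹ Φ₁₁ Φ₁₁ᵀ, hinv, one_mul]
  have hE2 : E = P * Fᵀ * (F * P * Fᵀ + Λ)⁻¹ := by
    rw [← hEeq, mul_assoc, mul_nonsing_inv _ hdS, mul_one]
  refine ⟨hE2, ?_⟩
  have hEΦ : Φ₂₁ * Φ₂₁ᵀ = E * (F * P) := by
    rw [hE, ← h12, mul_assoc, ← mul_assoc Φ₁₁⁻¹ Φ₁₁ Φ₂₁ᵀ, hinv, one_mul]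
  rw [mul_assoc, ← hEΦ, ← h22]
  abel
end
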